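/- arXiv:0709.4393 — 2 statements merged into one kernel-verified Lean document; each statement's English description precedes it below -/
import Mathlib

section
/- In the group G₄, the images of the generators satisfy (a₁⁻²b₁a₁²)⁶ = (a₂⁻²b₂a₂²)⁶. -/
/-! The group `G₄`: quotient of the free group on `a₁, b₁, a₂, b₂` (modelled on
`Fin 4` with `0 = a₁`, `1 = b₁`, `2 = a₂`, `3 = b₂`) by the normal closure of
`[a₁,b₁][a₂,b₂]` and `a₁⁻²b₁⁴a₁² · a₂⁻²b₂⁻³a₂² · a₁⁻²b₁²a₁² · a₂⁻²b₂⁻³a₂²`. -/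

open scoped commutatorElement

/-- The surface relator `[a₁,b₁][a₂,b₂]`. -/
def rel1 : FreeGroup (Fin 4) :=
  ⁅FreeGroup.of (0 : Fin 4), FreeGroup.of (1 : Fin 4)⁆ *
    ⁅FreeGroup.of (2 : Fin 4), FreeGroup.of (3 : Fin 4)⁆

/-- The relator `a₁⁻²b₁⁴a₁² a₂⁻²b₂⁻³a₂² a₁⁻²b₁²a₁² a₂⁻²b₂⁻³a₂²`. -/
def rel2 : FreeGroup (Fin 4) :=
  FreeGroup.of (0 : Fin 4) ^ (-2 : ℤ) * FreeGroup.of (1 : Fin 4) ^ 4 *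
    FreeGroup.of (0 : Fin 4) ^ 2 *
  (FreeGroup.of (2 : Fin 4) ^ (-2 : ℤ) * FreeGroup.of (3 : Fin 4) ^ (-3 : ℤ) *
    FreeGroup.of (2 : Fin 4) ^ 2) *
  (FreeGroup.of (0 : Fin 4) ^ (-2 : ℤ) * FreeGroup.of (1 : Fin 4) ^ 2 *
    FreeGroup.of (0 : Fin 4) ^ 2) *
  (FreeGroup.of (2 : Fin 4) ^ (-2 : ℤ) * FreeGroup.of (3 : Fin 4) ^ (-3 : ℤ) *
    FreeGroup.of (2 : Fin 4) ^ 2)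

/-- The group `G₄`. -/
abbrev G4 : Type :=
  FreeGroup (Fin 4) ⧸ Subgroup.normalClosure {rel1, rel2}

/-- The image in `G₄` of the `i`-th generator. -/
def g4 (i : Fin 4) : G4 :=
  QuotientGroup.mk' (Subgroup.normalClosure {rel1, rel2}) (FreeGroup.of i)

/-! Write `X = a₁⁻²b₁a₁²` and `U = (a₂⁻²b₂a₂²)⁻³`. Since conjugation is a homomorphism, the
second relator says `X⁴UX²U = 1`, i.e. `X²V² = 1` for `V = X²U`. Then `X² = V⁻²` commutes with
`V`, so `U = X⁻²V = V³` and `X⁶ = V⁻⁶ = U⁻²`. -/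

section GroupLemmas

variable {G : Type*} [Group G]

theorem pow_six_eq_of_pow_four_mul_mul_pow_two_mul_eq_one {X U : G}
    (h : X ^ 4 * U * X ^ 2 * U = 1) : X ^ 6 = U⁻¹ ^ 2 := by
  obtain ⟨V, hV⟩ : ∃ V, V = X ^ 2 * U := ⟨_, rfl⟩
  have hVsq : V ^ 2 = X⁻¹ ^ 2 := by
    have hXV : X ^ 2 * V ^ 2 = 1 := by rw [hV, sq (X ^ 2 * U), ← h]; group
    rw [eq_inv_of_mul_eq_one_right hXV, inv_pow]
  have hU : U = V ^ 3 := by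
    calc U = X⁻¹ ^ 2 * V := by rw [hV]; group
      _ = V ^ 3 := by rw [← hVsq]; group
  calc X ^ 6 = (X⁻¹ ^ 2)⁻¹ ^ 3 := by group
    _ = U⁻¹ ^ 2 := by rw [← hVsq, hU]; group

theorem conj_zpow_neg_two_zpow (a b : G) (n : ℤ) :
    (a ^ (-2 : ℤ) * b * a ^ 2) ^ n = a ^ (-2 : ℤ) * b ^ n * a ^ 2 := by
  have ha : a ^ 2 = (a ^ (-2 : ℤ))⁻¹ := by group
  rw [ha, conj_zpow]

theorem conj_zpow_neg_two_pow (a b : G) (n : ℕ) :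
    (a ^ (-2 : ℤ) * b * a ^ 2) ^ n = a ^ (-2 : ℤ) * b ^ n * a ^ 2 := by
  exact_mod_cast conj_zpow_neg_two_zpow a b n

end GroupLemmas

theorem g4_rel2 :
    (g4 0 ^ (-2 : ℤ) * g4 1 * g4 0 ^ 2) ^ 4 * (g4 2 ^ (-2 : ℤ) * g4 3 * g4 2 ^ 2) ^ (-3 : ℤ) *
      (g4 0 ^ (-2 : ℤ) * g4 1 * g4 0 ^ 2) ^ 2 *
      (g4 2 ^ (-2 : ℤ) * g4 3 * g4 2 ^ 2) ^ (-3 : ℤ) = 1 := by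
  have hmem : rel2 ∈ Subgroup.normalClosure {rel1, rel2} :=
    Subgroup.subset_normalClosure (Set.mem_insert_of_mem _ rfl)
  have hmk : QuotientGroup.mk' _ rel2 = (1 : G4) := (QuotientGroup.eq_one_iff _).mpr hmem
  rw [← hmk, conj_zpow_neg_two_pow, conj_zpow_neg_two_pow, conj_zpow_neg_two_zpow]
  rfl

/-- In `G₄`, the images of the generators satisfy `(a₁⁻²b₁a₁²)⁶ = (a₂⁻²b₂a₂²)⁶`. -/
theorem g4_relation :
    (g4 0 ^ (-2 : ℤ) * g4 1 * g4 0 ^ 2) ^ 6 =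
      (g4 2 ^ (-2 : ℤ) * g4 3 * g4 2 ^ 2) ^ 6 := by
  rw [pow_six_eq_of_pow_four_mul_mul_pow_two_mul_eq_one g4_rel2]
  group
end

section
/- Let M₁ be the subgroup of G₄ generated by the images of a₁ and b₁, and M₂ the subgroup of G₄ generated by the images of a₂ and b₂. Then M₁ and M₂ have exceptional intersection: M₁ ∩ M₂ is strictly larger than the cyclic subgroup of G₄ generated by the image of [a₁,b₁] (which is the image of the intersection of the corresponding subgroups of the genus-2 surface group). -/
open scoped commutatorElement

/-! Put `w₁ = a₁⁻²b₁²a₁² ∈ M₁` and `w₂ = a₂⁻²b₂⁻³a₂² ∈ M₂`. The second relator is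
`w₁² w₂ w₁ w₂`; comparing it with its cyclic conjugate `w₁ w₂ w₁² w₂` shows that `w₁` and `w₂`
commute, whence `w₂² = w₁⁻³ ∈ M₁ ∩ M₂`. The exponent sum in `b₁, b₂` is a homomorphism to `ℤ`
that kills every commutator but takes the value `-6` on `w₂²`, so `w₂² ∉ ⟨[a₁,b₁]⟩`. -/

section Group

variable {G : Type*} [Group G] {x y : G}

theorem Commute.of_sq_mul_mul_mul_eq_one (h : x ^ 2 * y * x * y = 1) : Commute x y := by
  have h' : x * y * x ^ 2 * y = 1 := by
    calc x * y * x ^ 2 * y = (x ^ 2 * y)⁻¹ * (x ^ 2 * y * x * y) * (x ^ 2 * y) := by group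
      _ = 1 := by rw [h]; group
  calc x * y = x⁻¹ * (x ^ 2 * y * x * y) * y⁻¹ * x⁻¹ := by group
    _ = x⁻¹ * (x * y * x ^ 2 * y) * y⁻¹ * x⁻¹ := by rw [h, h']
    _ = y * x := by group

theorem sq_eq_inv_pow_three_of_sq_mul_mul_mul_eq_one (h : x ^ 2 * y * x * y = 1) :
    y ^ 2 = (x ^ 3)⁻¹ := by
  have hxy := Commute.of_sq_mul_mul_mul_eq_one h
  rw [eq_inv_iff_mul_eq_one, ← h]
  calc y ^ 2 * x ^ 3 = x ^ 3 * y ^ 2 := ((hxy.pow_pow 3 2).eq).symm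
    _ = x ^ 2 * (x * y) * y := by simp only [pow_succ, pow_zero, one_mul, mul_assoc]
    _ = x ^ 2 * (y * x) * y := by rw [hxy.eq]
    _ = x ^ 2 * y * x * y := by group

theorem Subgroup.commutatorElement_mem {H : Subgroup G} (hx : x ∈ H) (hy : y ∈ H) :
    ⁅x, y⁆ ∈ H := by
  rw [commutatorElement_def]
  exact mul_mem (mul_mem (mul_mem hx hy) (inv_mem hx)) (inv_mem hy)

theorem CommGroup.commutatorElement_eq_one {A : Type*} [CommGroup A] (a b : A) : ⁅a, b⁆ = 1 :=
  commutatorElement_eq_one_iff_mul_comm.mpr (mul_comm a b)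

theorem MonoidHom.map_zpow_commutatorElement {A : Type*} [CommGroup A] (f : G →* A) (n : ℤ) :
    f (⁅x, y⁆ ^ n) = 1 := by
  rw [map_zpow, map_commutatorElement, CommGroup.commutatorElement_eq_one, one_zpow]

end Group

namespace G4

theorem lift_g4_eq_one_of_mem {r : FreeGroup (Fin 4)}
    (hr : r ∈ ({rel1, rel2} : Set (FreeGroup (Fin 4)))) : FreeGroup.lift g4 r = 1 :=
  (FreeGroup.lift_unique (PresentedGroup.mk _) fun _ => rfl).symm.trans
    (PresentedGroup.one_of_mem hr)

theorem commutatorElement_mul_commutatorElement_eq_one : ⁅g4 0, g4 1⁆ * ⁅g4 2, g4 3⁆ = 1 := by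
  simpa only [rel1, map_mul, map_commutatorElement, FreeGroup.lift_apply_of] using
    lift_g4_eq_one_of_mem (Set.mem_insert rel1 {rel2})

def w₁ : G4 := g4 0 ^ (-2 : ℤ) * g4 1 ^ 2 * g4 0 ^ 2

def w₂ : G4 := g4 2 ^ (-2 : ℤ) * g4 3 ^ (-3 : ℤ) * g4 2 ^ 2

theorem w₁_sq_mul_w₂_mul_w₁_mul_w₂ : w₁ ^ 2 * w₂ * w₁ * w₂ = 1 := by
  have h := lift_g4_eq_one_of_mem (Set.mem_insert_of_mem rel1 (Set.mem_singleton rel2))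
  simp only [rel2, map_mul, map_pow, map_zpow, FreeGroup.lift_apply_of] at h
  rw [← h, w₁, w₂, sq]
  group

theorem w₁_mem_closure : w₁ ∈ Subgroup.closure {g4 0, g4 1} := by
  have ha : g4 0 ∈ Subgroup.closure {g4 0, g4 1} := Subgroup.subset_closure (by simp)
  have hb : g4 1 ∈ Subgroup.closure {g4 0, g4 1} := Subgroup.subset_closure (by simp)
  exact mul_mem (mul_mem (zpow_mem ha _) (pow_mem hb _)) (pow_mem ha _)

theorem w₂_mem_closure : w₂ ∈ Subgroup.closure {g4 2, g4 3} := by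
  have ha : g4 2 ∈ Subgroup.closure {g4 2, g4 3} := Subgroup.subset_closure (by simp)
  have hb : g4 3 ∈ Subgroup.closure {g4 2, g4 3} := Subgroup.subset_closure (by simp)
  exact mul_mem (mul_mem (zpow_mem ha _) (zpow_mem hb _)) (pow_mem ha _)

theorem commutatorElement_mem_closure_pair {i j : Fin 4} :
    ⁅g4 i, g4 j⁆ ∈ Subgroup.closure {g4 i, g4 j} :=
  Subgroup.commutatorElement_mem (Subgroup.subset_closure (by simp))
    (Subgroup.subset_closure (by simp))

def bExponentSum : G4 →* Multiplicative ℤ :=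
  PresentedGroup.toGroup (f := fun i => Multiplicative.ofAdd (![0, 1, 0, 1] i)) <| by
    rintro r (rfl | rfl)
    · simp only [rel1, map_mul, map_commutatorElement, CommGroup.commutatorElement_eq_one,
        mul_one]
    · simp only [rel2, map_mul, map_pow, map_zpow, FreeGroup.lift_apply_of]
      decide

theorem bExponentSum_g4 (i : Fin 4) :
    bExponentSum (g4 i) = Multiplicative.ofAdd (![0, 1, 0, 1] i) :=
  PresentedGroup.toGroup.of _

theorem bExponentSum_w₂ : bExponentSum w₂ = Multiplicative.ofAdd (-3) := by
  simp only [w₂, map_mul, map_pow, map_zpow, bExponentSum_g4]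
  decide

end G4

/-- The Magnus subgroups `M₁ = ⟨a₁, b₁⟩` and `M₂ = ⟨a₂, b₂⟩` of `G₄` have
**exceptional intersection**: `M₁ ∩ M₂` is strictly larger than the cyclic subgroup
generated by the image of `[a₁,b₁]` (the image of the intersection of the
corresponding subgroups of the genus-2 surface group). -/
theorem g4_exceptional_intersection :
    Subgroup.zpowers ⁅g4 0, g4 1⁆ <
      Subgroup.closure {g4 0, g4 1} ⊓ Subgroup.closure {g4 2, g4 3} := by
  refine SetLike.lt_iff_le_and_exists.mpr
    ⟨?_, G4.w₂ ^ 2, Subgroup.mem_inf.mpr ⟨?_, pow_mem G4.w₂_mem_closure 2⟩, ?_⟩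
  · have hM₂ := inv_mem (G4.commutatorElement_mem_closure_pair (i := 2) (j := 3))
    rw [← eq_inv_of_mul_eq_one_left G4.commutatorElement_mul_commutatorElement_eq_one] at hM₂
    exact Subgroup.zpowers_le.mpr
      (Subgroup.mem_inf.mpr ⟨G4.commutatorElement_mem_closure_pair, hM₂⟩)
  · rw [sq_eq_inv_pow_three_of_sq_mul_mul_mul_eq_one G4.w₁_sq_mul_w₂_mul_w₁_mul_w₂]
    exact inv_mem (pow_mem G4.w₁_mem_closure 3)
  · rintro ⟨n, hn⟩
    have h := congrArg G4.bExponentSum hn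
    rw [G4.bExponentSum.map_zpow_commutatorElement, map_pow, G4.bExponentSum_w₂] at h
    exact absurd h (by decide)
end
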